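/- The mean distance of the cyclic Kautz digraph CK(d,3) with d ≥ 3 equals (3d³ + d² − 5d − 2)/(d³ − d), computed as (1/N)·Σ_{k=0}^{5} k·N_k where N = d³ − d and the distance distribution from any fixed vertex is N₀ = 1, N₁ = d−1, N₂ = (d−1)², N₃ = (d−1)³ − 1, N₄ = 2(d−1)², N₅ = d−1. -/

import Mathlib

/-- Vertex of `CK(d,3)`: a triple with `x₁ ≠ x₂`, `x₂ ≠ x₃`, `x₁ ≠ x₃`. -/
abbrev ck3Vert {n : ℕ} (x : Fin 3 → Fin n) : Prop :=
  x 0 ≠ x 1 ∧ x 1 ≠ x 2 ∧ x 0 ≠ x 2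

/-- Arc of `CK(d,3)`: `x₁x₂x₃ → x₂x₃y` with `y ≠ x₂, x₃`. -/
abbrev ck3Adj {n : ℕ} (x y : Fin 3 → Fin n) : Prop :=
  y 0 = x 1 ∧ y 1 = x 2 ∧ y 2 ≠ x 1 ∧ y 2 ≠ x 2

/-- A walk of length `k` in `CK(d,3)` from `u` to `v`. -/
abbrev ck3Walk {n : ℕ} (k : ℕ) (u v : Fin 3 → Fin n) : Prop :=
  ∃ w : Fin (k + 1) → Fin 3 → Fin n, w 0 = u ∧ w (Fin.last k) = v ∧
    (∀ i, ck3Vert (w i)) ∧ ∀ i j : Fin (k + 1), j.val = i.val + 1 → ck3Adj (w i) (w j)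

/-- `v` is at distance exactly `m` from `u` in `CK(d,3)`. -/
abbrev ck3DistEq {n : ℕ} (u v : Fin 3 → Fin n) (m : ℕ) : Prop :=
  ck3Walk m u v ∧ ∀ k < m, ¬ ck3Walk k u v

/-! A walk of length `k` from `u` is a word `u₀u₁u₂x₁…xₖ` in which every letter differs from the
two letters before it, and it ends at the vertex spelled by its last three letters. For `k ≤ 3`
the end vertex `v` determines the word, and for `k = 4` only one letter between `u` and `v` is
free, so the ends of walks of length `k ≤ 4` are described by explicit (in)equalities between the
letters of `u` and `v`; the remaining vertices `u₂u₁y` are reached in five steps. Hence the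
distance from `u` to `v ≠ u` depends only on the first two letters of `v`, and as every pair of
distinct letters extends to a vertex in `d - 1` ways, the distance classes are counted by
counting pairs of letters. -/

open Finset

lemma Fin.exists_ne_ne_ne {n : ℕ} (hn : 4 ≤ n) (p q r : Fin n) :
    ∃ x, x ≠ p ∧ x ≠ q ∧ x ≠ r := by
  obtain ⟨x, -, hx⟩ := exists_mem_notMem_of_card_lt_card (s := {p, q, r}) (t := univ)
    (by grw [card_le_three, card_univ, Fintype.card_fin]; omega)
  simp only [mem_insert, mem_singleton, not_or] at hx
  exact ⟨x, hx⟩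

lemma sum_fin_three_arrow {α M : Type*} [Fintype α] [AddCommMonoid M] (f : (Fin 3 → α) → M) :
    ∑ v, f v = ∑ x, ∑ y, ∑ z, f ![x, y, z] := by
  rw [← (Fin.consEquiv fun _ => α).sum_comp, Fintype.sum_prod_type]
  refine sum_congr rfl fun x _ => ?_
  rw [← (Fin.consEquiv fun _ => α).sum_comp, Fintype.sum_prod_type]
  refine sum_congr rfl fun y _ => ?_
  rw [← (Fin.consEquiv fun _ => α).sum_comp, Fintype.sum_prod_type]
  exact sum_congr rfl fun z _ => Fintype.sum_unique _

section FinCounting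

variable {n : ℕ}

lemma card_filter_ne_ne {a b : Fin n} (h : a ≠ b) : #{x | x ≠ a ∧ x ≠ b} = n - 2 := by
  rw [show ({x | x ≠ a ∧ x ≠ b} : Finset (Fin n)) = {a, b}ᶜ by ext; simp,
    card_compl, card_pair h, Fintype.card_fin]

lemma sum_eq_add_add_mul_of_forall_ne {p q : Fin n} (hpq : p ≠ q) (f : Fin n → ℕ) (z : ℕ)
    (hf : ∀ a, a ≠ p → a ≠ q → f a = z) : ∑ a, f a = f p + f q + (n - 2) * z := by
  rw [← add_sum_erase _ _ (mem_univ p), ← add_sum_erase _ _ (mem_erase.2 ⟨hpq.symm, mem_univ q⟩),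
    sum_congr rfl fun a ha => hf a (ne_of_mem_erase (mem_of_mem_erase ha)) (ne_of_mem_erase ha),
    sum_const, card_erase_of_mem (mem_erase.2 ⟨hpq.symm, mem_univ q⟩),
    card_erase_of_mem (mem_univ p), card_univ, Fintype.card_fin, smul_eq_mul, add_assoc,
    Nat.sub_sub]

lemma card_filter_ne_ite_eq {a c : Fin n} (h : c ≠ a) (x y m : ℕ) :
    #{b | b ≠ a ∧ (if b = c then x else y) = m} =
      (if x = m then 1 else 0) + if y = m then n - 2 else 0 := by
  by_cases hx : x = m <;> by_cases hy : y = m <;>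
    simp only [ne_eq, hx, hy, apply_ite (· = m), ite_self, if_false_right, if_false_left, and_true,
      and_false, filter_false, card_empty, ↓reduceIte, add_zero, zero_add]
  · rw [filter_not, filter_eq', if_pos (mem_univ a), card_sdiff]
    simp only [card_univ, Fintype.card_fin, inter_univ, card_singleton]
    have := Fin.val_ne_of_ne h
    omega
  · refine card_eq_one.2 ⟨c, ?_⟩
    ext b
    simp only [mem_filter, mem_univ, true_and, mem_singleton]
    exact ⟨And.right, fun hb => ⟨hb ▸ h, hb⟩⟩
  · exact card_filter_ne_ne h.symm

end FinCounting

section Walks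

variable {n k m : ℕ} {u v : Fin 3 → Fin n}

lemma ck3Walk_zero_iff : ck3Walk 0 u v ↔ v = u ∧ ck3Vert u := by
  constructor
  · rintro ⟨w, rfl, rfl, hw, -⟩
    exact ⟨rfl, hw 0⟩
  · rintro ⟨rfl, hv⟩
    exact ⟨fun _ => v, rfl, rfl, fun _ => hv, fun i j hij => by omega⟩

lemma ck3Walk_succ_iff :
    ck3Walk (k + 1) u v ↔ ∃ m, ck3Vert u ∧ ck3Adj u m ∧ ck3Walk k m v := by
  constructor
  · rintro ⟨w, rfl, rfl, hw, hadj⟩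
    refine ⟨w 1, hw 0, hadj 0 1 (by simp), w ∘ Fin.succ, rfl, by simp, fun i => hw _,
      fun i j hij => hadj _ _ (by simp [hij])⟩
  · rintro ⟨m, hu, hum, w, rfl, rfl, hw, hadj⟩
    refine ⟨Fin.cons u w, rfl, by simp [← Fin.succ_last], Fin.cases hu hw, fun i j hij => ?_⟩
    obtain ⟨j, rfl⟩ := Fin.eq_succ_of_ne_zero (i := j) (by rintro rfl; simp at hij)
    cases i using Fin.cases with
    | zero =>
      obtain rfl : j = 0 := by ext; simpa using hij
      exact hum
    | succ i => exact hadj i j (by simpa using hij)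

lemma ck3Walk_one_iff : ck3Walk 1 u v ↔ ck3Vert u ∧ ck3Adj u v := by
  rw [ck3Walk_succ_iff]
  constructor
  · rintro ⟨m, hu, hum, hmv⟩
    obtain ⟨rfl, -⟩ := ck3Walk_zero_iff.1 hmv
    exact ⟨hu, hum⟩
  · rintro ⟨hu, huv⟩
    refine ⟨v, hu, huv, ck3Walk_zero_iff.2 ⟨rfl, ?_⟩⟩
    grind

lemma ck3Walk_two_iff : ck3Walk 2 u v ↔
    ck3Vert u ∧ v 0 = u 2 ∧ v 1 ≠ u 1 ∧ v 1 ≠ u 2 ∧ v 2 ≠ v 1 ∧ v 2 ≠ u 2 := by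
  rw [ck3Walk_succ_iff]
  constructor
  · rintro ⟨m, hu, hum, hmv⟩
    rw [ck3Walk_one_iff] at hmv
    grind
  · rintro ⟨hu, h0, h1, h2, h3, h4⟩
    exact ⟨![u 1, u 2, v 1], hu, ⟨rfl, rfl, h1, h2⟩,
      ck3Walk_one_iff.2 ⟨⟨hu.2.1, h2.symm, h1.symm⟩, h0, rfl, h4, h3⟩⟩

lemma ck3Walk_three_iff : ck3Walk 3 u v ↔
    ck3Vert u ∧ ck3Vert v ∧ v 0 ≠ u 1 ∧ v 0 ≠ u 2 ∧ v 1 ≠ u 2 := by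
  rw [ck3Walk_succ_iff]
  constructor
  · rintro ⟨m, hu, hum, hmv⟩
    rw [ck3Walk_two_iff] at hmv
    grind
  · rintro ⟨hu, hv, h0, h1, h2⟩
    exact ⟨![u 1, u 2, v 0], hu, ⟨rfl, rfl, h0, h1⟩,
      ck3Walk_two_iff.2 ⟨⟨hu.2.1, h1.symm, h0.symm⟩, rfl, h2, hv.1.symm, hv.2.1.symm, hv.2.2.symm⟩⟩

lemma ck3Walk_four_iff : ck3Walk 4 u v ↔ ck3Vert u ∧ ck3Vert v ∧ v 0 ≠ u 2 ∧
    ∃ e, e ≠ u 1 ∧ e ≠ u 2 ∧ e ≠ v 0 ∧ e ≠ v 1 := by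
  rw [ck3Walk_succ_iff]
  constructor
  · rintro ⟨m, hu, hum, hmv⟩
    rw [ck3Walk_three_iff] at hmv
    exact ⟨hu, hmv.2.1, by grind, m 2, by grind⟩
  · rintro ⟨hu, hv, h, e, heu1, heu2, hev0, hev1⟩
    exact ⟨![u 1, u 2, e], hu, ⟨rfl, rfl, heu1, heu2⟩,
      ck3Walk_three_iff.2 ⟨⟨hu.2.1, heu2.symm, heu1.symm⟩, hv, h, hev0.symm, hev1.symm⟩⟩

lemma ck3Walk_five_of_eq (hn : 4 ≤ n) (hu : ck3Vert u) (hv : ck3Vert v) (h0 : v 0 = u 2)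
    (h1 : v 1 = u 1) : ck3Walk 5 u v := by
  obtain ⟨e, he1, he2, -⟩ := Fin.exists_ne_ne_ne hn (u 1) (u 2) (u 2)
  obtain ⟨f, hf1, hf2, hfe⟩ := Fin.exists_ne_ne_ne hn (u 1) (u 2) e
  refine ck3Walk_succ_iff.2 ⟨![u 1, u 2, e], hu, ⟨rfl, rfl, he1, he2⟩,
    ck3Walk_four_iff.2 ⟨⟨hu.2.1, he2.symm, he1.symm⟩, hv,
    fun h => he2 (h.symm.trans h0), f, hf2, hfe, fun h => hf2 (h.trans h0),
    fun h => hf1 (h.trans h1)⟩⟩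

lemma ck3DistEq_iff_isLeast :
    ck3DistEq u v m ↔ IsLeast {k | ck3Walk k u v} m :=
  and_congr_right fun _ =>
    ⟨fun h k hk => not_lt.1 fun hlt => h k hlt hk, fun h _ hk hw => (h hw).not_gt hk⟩

end Walks

-- For a vertex `v ≠ u`, `ck3PairLayer (u 1) (u 2) (v 0) (v 1)` is the distance from `u` to `v`.
def ck3PairLayer {n : ℕ} (p q a b : Fin n) : ℕ :=
  if a = p then (if b = q then 1 else 4)
  else if a = q then (if b = p then 5 else 2)
  else if b = q then 4 else 3

def ck3Layer {n : ℕ} (u v : Fin 3 → Fin n) : ℕ :=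
  if v = u then 0 else ck3PairLayer (u 1) (u 2) (v 0) (v 1)

section Layer

variable {n k m : ℕ} {u v : Fin 3 → Fin n}

lemma ck3Layer_eq_zero_iff : ck3Layer u v = 0 ↔ v = u := by
  unfold ck3Layer ck3PairLayer
  split_ifs <;> simp_all

lemma ck3Layer_lt_six : ck3Layer u v < 6 := by
  unfold ck3Layer ck3PairLayer
  split_ifs <;> norm_num

lemma ck3PairLayer_self (hu : ck3Vert u) :
    ck3PairLayer (u 1) (u 2) (u 0) (u 1) = 3 := by
  simp [ck3PairLayer, hu.1, hu.2.1, hu.2.2]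

lemma ck3Walk_ck3Layer (hn : 4 ≤ n) (hu : ck3Vert u) (hv : ck3Vert v) :
    ck3Walk (ck3Layer u v) u v := by
  unfold ck3Layer ck3PairLayer
  split_ifs with hvu h0 h1 h0' h1' h1'
  · exact ck3Walk_zero_iff.2 ⟨hvu, hu⟩
  · exact ck3Walk_one_iff.2 ⟨hu, by grind⟩
  · obtain ⟨e, he⟩ := Fin.exists_ne_ne_ne hn (u 1) (u 2) (v 1)
    exact ck3Walk_four_iff.2 ⟨hu, hv, by grind, e, by grind⟩
  · exact ck3Walk_five_of_eq hn hu hv h0' h1'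
  · exact ck3Walk_two_iff.2 (by grind)
  · obtain ⟨e, he⟩ := Fin.exists_ne_ne_ne hn (u 1) (u 2) (v 0)
    exact ck3Walk_four_iff.2 ⟨hu, hv, h0', e, by grind⟩
  · exact ck3Walk_three_iff.2 ⟨hu, hv, h0, h0', h1'⟩

lemma not_ck3Walk_of_lt_ck3Layer (hk : k < ck3Layer u v) :
    ¬ ck3Walk k u v := by
  unfold ck3Layer ck3PairLayer at hk
  split_ifs at hk <;> interval_cases k <;>
    simp only [ck3Walk_zero_iff, ck3Walk_one_iff, ck3Walk_two_iff, ck3Walk_three_iff,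
      ck3Walk_four_iff] <;> grind

lemma ck3DistEq_ck3Layer (hn : 4 ≤ n) (hu : ck3Vert u) (hv : ck3Vert v) :
    ck3DistEq u v (ck3Layer u v) :=
  ⟨ck3Walk_ck3Layer hn hu hv, fun _ hk => not_ck3Walk_of_lt_ck3Layer hk⟩

lemma ck3DistEq_iff_ck3Layer_eq (hn : 4 ≤ n) (hu : ck3Vert u) (hv : ck3Vert v) :
    ck3DistEq u v m ↔ ck3Layer u v = m :=
  ⟨fun h => (ck3DistEq_iff_isLeast.1 (ck3DistEq_ck3Layer hn hu hv)).unique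
    (ck3DistEq_iff_isLeast.1 h), fun h => h ▸ ck3DistEq_ck3Layer hn hu hv⟩

lemma sInf_setOf_ck3Walk (hn : 4 ≤ n) (hu : ck3Vert u) (hv : ck3Vert v) :
    sInf {k | ck3Walk k u v} = ck3Layer u v :=
  (ck3DistEq_iff_isLeast.1 (ck3DistEq_ck3Layer hn hu hv)).csInf_eq

end Layer

-- The distance distribution `N₀, …, N₅` of `CK(d,3)` as a function of `e = d - 1`.
def ck3LayerSize (e : ℕ) : ℕ → ℕ
  | 0 => 1
  | 1 => e
  | 2 => e ^ 2
  | 3 => e ^ 3 - 1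
  | 4 => 2 * e ^ 2
  | 5 => e
  | _ => 0

section Counting

variable {n : ℕ} {u : Fin 3 → Fin n}

lemma card_filter_ck3Vert (P : Fin n → Fin n → Prop) [DecidableRel P] :
    #{v : Fin 3 → Fin n | ck3Vert v ∧ P (v 0) (v 1)} = (n - 2) * ∑ a, #{b | b ≠ a ∧ P a b} := by
  rw [card_filter, sum_fin_three_arrow, mul_sum]
  refine sum_congr rfl fun a _ => ?_
  rw [card_filter, mul_sum]
  refine sum_congr rfl fun b _ => ?_
  by_cases h : b ≠ a ∧ P a b
  · rw [if_pos h, mul_one, ← card_filter_ne_ne h.1, card_filter]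
    refine sum_congr rfl fun c _ => ?_
    have hv : ck3Vert ![a, b, c] ↔ c ≠ b ∧ c ≠ a :=
      ⟨fun ⟨_, hbc, hac⟩ => ⟨hbc.symm, hac.symm⟩, fun ⟨hbc, hac⟩ => ⟨h.1.symm, hbc.symm, hac.symm⟩⟩
    exact if_congr ((and_iff_left h.2).trans hv) rfl rfl
  · rw [if_neg h, mul_zero]
    refine sum_eq_zero fun c _ => if_neg ?_
    rintro ⟨⟨hab, -⟩, hP⟩
    exact h ⟨Ne.symm hab, hP⟩

lemma card_ck3Vert : #{v : Fin 3 → Fin n | ck3Vert v} = n * (n - 1) * (n - 2) := by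
  have h := card_filter_ck3Vert (n := n) fun _ _ => True
  simp only [and_true] at h
  rw [h, mul_comm, sum_congr rfl fun a _ => (by rw [filter_ne', card_erase_of_mem (mem_univ a)]),
    sum_const, card_univ, Fintype.card_fin, smul_eq_mul]

lemma card_ck3PairLayer {p q : Fin n} (hpq : p ≠ q) (m : ℕ) :
    #{v : Fin 3 → Fin n | ck3Vert v ∧ ck3PairLayer p q (v 0) (v 1) = m} = (n - 2) *
      ((if 1 = m then 1 else 0) + (if 4 = m then n - 2 else 0) +
        ((if 5 = m then 1 else 0) + (if 2 = m then n - 2 else 0)) +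
        (n - 2) * ((if 4 = m then 1 else 0) + if 3 = m then n - 2 else 0)) := by
  rw [card_filter_ck3Vert fun a b => ck3PairLayer p q a b = m, sum_eq_add_add_mul_of_forall_ne hpq _
    ((if 4 = m then 1 else 0) + if 3 = m then n - 2 else 0) fun a hp hq => ?_]
  · simp only [ck3PairLayer, ↓reduceIte, if_neg hpq.symm]
    rw [card_filter_ne_ite_eq hpq.symm, card_filter_ne_ite_eq hpq]
  · simp only [ck3PairLayer, if_neg hp, if_neg hq]
    exact card_filter_ne_ite_eq (Ne.symm hq) _ _ _

lemma card_ck3Layer (hu : ck3Vert u) (m : ℕ) :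
    #{v | ck3Vert v ∧ ck3Layer u v = m} = ck3LayerSize (n - 2) m := by
  cases m with
  | zero =>
    refine card_eq_one.2 ⟨u, ?_⟩
    ext v
    simp only [mem_filter, mem_univ, true_and, ck3Layer_eq_zero_iff, mem_singleton]
    exact ⟨And.right, fun h => ⟨h ▸ hu, h⟩⟩
  | succ m =>
    have hfilter : ({v | ck3Vert v ∧ ck3Layer u v = m + 1} : Finset (Fin 3 → Fin n)) =
        ({v | ck3Vert v ∧ ck3PairLayer (u 1) (u 2) (v 0) (v 1) = m + 1} :
          Finset (Fin 3 → Fin n)).erase u := by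
      ext v
      simp only [mem_filter, mem_erase, mem_univ, true_and]
      by_cases hvu : v = u <;> simp [ck3Layer, hvu]
    rw [hfilter, card_erase_eq_ite, card_ck3PairLayer hu.2.1]
    simp only [mem_filter, mem_univ, true_and, ck3PairLayer_self hu, and_iff_right hu]
    rcases m with _ | _ | _ | _ | _ | m <;> simp [ck3LayerSize] <;> ring_nf

lemma ncard_ck3DistEq (hn : 4 ≤ n) (hu : ck3Vert u) (m : ℕ) :
    {v | ck3Vert v ∧ ck3DistEq u v m}.ncard = ck3LayerSize (n - 2) m := by
  rw [← card_ck3Layer hu, ← Set.ncard_coe_finset]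
  congr 1
  ext v
  simp only [coe_filter, mem_univ, true_and]
  exact and_congr_right (ck3DistEq_iff_ck3Layer_eq hn hu)

lemma sum_sInf_ck3Walk (hn : 4 ≤ n) (hu : ck3Vert u) :
    ∑ v : {v // ck3Vert v}, sInf {k | ck3Walk k u v.1} =
      ∑ m ∈ range 6, ck3LayerSize (n - 2) m * m := by
  rw [← sum_subtype {v | ck3Vert v} (by simp) fun v => sInf {k | ck3Walk k u v},
    sum_congr rfl fun v hv => sInf_setOf_ck3Walk hn hu (mem_filter.1 hv).2,
    ← sum_fiberwise_of_maps_to (t := range 6) (g := ck3Layer u)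
      fun v _ => mem_range.2 ck3Layer_lt_six]
  refine sum_congr rfl fun m _ => ?_
  rw [sum_congr rfl fun v hv => (mem_filter.1 hv).2, sum_const, smul_eq_mul, filter_filter,
    card_ck3Layer hu]

end Counting

lemma succ_mul_mul_pred (d : ℕ) : (d + 1) * d * (d - 1) = d ^ 3 - d := by
  rcases d with _ | e
  · rfl
  · rw [Nat.add_sub_cancel]
    exact Nat.eq_sub_of_add_eq (by ring)

lemma cast_sum_ck3LayerSize_mul {d : ℕ} (hd : 2 ≤ d) :
    ((∑ m ∈ range 6, ck3LayerSize (d - 1) m * m : ℕ) : ℚ) =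
      3 * (d : ℚ) ^ 3 + d ^ 2 - 5 * d - 2 := by
  obtain ⟨e, rfl⟩ : ∃ e, d = e + 2 := ⟨d - 2, by omega⟩
  simp [sum_range_succ, ck3LayerSize]
  ring

/-- The mean distance of `CK(d,3)` with `d ≥ 3` is `(3d³ + d² − 5d − 2)/(d³ − d)`:
from any fixed vertex the distance distribution is `N₀ = 1`, `N₁ = d−1`,
`N₂ = (d−1)²`, `N₃ = (d−1)³ − 1`, `N₄ = 2(d−1)²`, `N₅ = d−1` (summing to
`N = d³ − d` vertices), and the average distance `(1/N)·Σ_k k·N_k` equals the stated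
value. -/
theorem stmt19 (d : ℕ) (hd : 3 ≤ d)
    (u : Fin 3 → Fin (d + 1)) (hu : ck3Vert u) :
    {v : Fin 3 → Fin (d + 1) | ck3Vert v ∧ ck3DistEq u v 0}.ncard = 1 ∧
    {v : Fin 3 → Fin (d + 1) | ck3Vert v ∧ ck3DistEq u v 1}.ncard = d - 1 ∧
    {v : Fin 3 → Fin (d + 1) | ck3Vert v ∧ ck3DistEq u v 2}.ncard = (d - 1) ^ 2 ∧
    {v : Fin 3 → Fin (d + 1) | ck3Vert v ∧ ck3DistEq u v 3}.ncard = (d - 1) ^ 3 - 1 ∧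
    {v : Fin 3 → Fin (d + 1) | ck3Vert v ∧ ck3DistEq u v 4}.ncard = 2 * (d - 1) ^ 2 ∧
    {v : Fin 3 → Fin (d + 1) | ck3Vert v ∧ ck3DistEq u v 5}.ncard = d - 1 ∧
    {v : Fin 3 → Fin (d + 1) | ck3Vert v}.ncard = d ^ 3 - d ∧
    ((∑ v : {v : Fin 3 → Fin (d + 1) // ck3Vert v},
        (sInf {k : ℕ | ck3Walk k u v.val} : ℕ) : ℕ) : ℚ) / ((d : ℚ) ^ 3 - d) =
      (3 * (d : ℚ) ^ 3 + d ^ 2 - 5 * d - 2) / ((d : ℚ) ^ 3 - d) := by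
  have hn : 4 ≤ d + 1 := by omega
  have hsub : d + 1 - 2 = d - 1 := by omega
  have hN := ncard_ck3DistEq hn hu
  rw [hsub] at hN
  refine ⟨hN 0, hN 1, hN 2, hN 3, hN 4, hN 5, ?_, ?_⟩
  · rw [Set.ncard_eq_toFinset_card', Set.toFinset_ofPred, card_ck3Vert, Nat.add_sub_cancel, hsub,
      succ_mul_mul_pred]
  · rw [sum_sInf_ck3Walk hn hu, hsub, cast_sum_ck3LayerSize_mul (by omega)]
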